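/- Covering injection lemma: let H be the greedy t-spanner of a metric space with t < 2 and H' a t-spanner of M_H. For each edge e' of H' fix a shortest path P_{e'} in H between its endpoints, and say e' covers each edge of P_{e'}. Then no edge of H' can cover two distinct edges of H that both lie outside H' (where an edge with a required shortest path through e' counts as covered by e'). -/

import Mathlib

open SimpleGraph
open scoped ENNReal

variable {V : Type*} [Fintype V] [DecidableEq V]

/-- The simple graph determined by a finite edge set. -/
def toSG (E : Finset (Sym2 V)) : SimpleGraph V := SimpleGraph.fromEdgeSet (↑E)

/-- Weight (in `ℝ≥0∞`) of a walk, given edge weights `w`. -/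
noncomputable def walkWeight (w : Sym2 V → ℝ) {G : SimpleGraph V} {u v : V}
    (p : G.Walk u v) : ℝ≥0∞ :=
  (p.edges.map fun e => ENNReal.ofReal (w e)).sum

/-- Shortest-path distance (in `ℝ≥0∞`) between the endpoints of the pair `e`
in the graph with edge set `H` and edge weights `w`.  (`⊤` if disconnected.) -/
noncomputable def edist (H : Finset (Sym2 V)) (w : Sym2 V → ℝ) (e : Sym2 V) : ℝ≥0∞ :=
  sInf {x | ∃ (u v : V) (p : (toSG H).Walk u v), e = s(u, v) ∧ walkWeight w p = x}

/-- Total weight of an edge set. -/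
noncomputable def gweight (w : Sym2 V → ℝ) (H : Finset (Sym2 V)) : ℝ := ∑ e ∈ H, w e

/-- `H` is a `t`-spanner of the graph with edge set `E` and weights `w`. -/
def IsSpanner (w : Sym2 V → ℝ) (t : ℝ) (E H : Finset (Sym2 V)) : Prop :=
  H ⊆ E ∧ ∀ u v : V, edist H w s(u, v) ≤ ENNReal.ofReal t * edist E w s(u, v)

open Classical in
/-- One pass of the greedy algorithm over a list of candidate edges. -/
noncomputable def greedyList (w : Sym2 V → ℝ) (t : ℝ) :
    List (Sym2 V) → Finset (Sym2 V) → Finset (Sym2 V)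
  | [], H => H
  | e :: l, H =>
      greedyList w t l (if ENNReal.ofReal (t * w e) < edist H w e then insert e H else H)

/-- `H` is an output of the greedy `t`-spanner algorithm on the graph with
edge set `E` and weights `w`: the edges of `E` are processed in some
non-decreasing order of weight. -/
def IsGreedy (w : Sym2 V → ℝ) (t : ℝ) (E H : Finset (Sym2 V)) : Prop :=
  ∃ l : List (Sym2 V), l.Nodup ∧ (∀ e, e ∈ l ↔ e ∈ E) ∧
    l.Pairwise (fun a b => w a ≤ w b) ∧ greedyList w t l ∅ = H

/-- `T` is a minimum spanning tree of the graph with edge set `E` and weights `w`. -/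
def IsMST (w : Sym2 V → ℝ) (E T : Finset (Sym2 V)) : Prop :=
  T ⊆ E ∧ (toSG T).IsTree ∧
    ∀ T' ⊆ E, (toSG T').IsTree → gweight w T ≤ gweight w T'

/-- The edge set of the complete graph on `V`. -/
def completeE (V : Type*) [Fintype V] [DecidableEq V] : Finset (Sym2 V) :=
  Finset.univ.filter fun e => ¬ e.IsDiag

/-- Metric distance as a weight function on unordered pairs. -/
noncomputable def mw (V : Type*) [MetricSpace V] : Sym2 V → ℝ :=
  Sym2.lift ⟨dist, fun a b => dist_comm a b⟩

/-- The weight function of the metric space induced by the graph with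
edge set `H` and weights `w` (shortest-path distances of pairs). -/
noncomputable def indw (H : Finset (Sym2 V)) (w : Sym2 V → ℝ) : Sym2 V → ℝ :=
  fun e => (edist H w e).toReal

/-- `d` satisfies the doubling property with doubling dimension (at most) `k`:
every ball of radius `r` can be covered by at most `2 ^ k` balls of radius `r / 2`. -/
def HasDoublingDim {M : Type*} (d : M → M → ℝ) (k : ℕ) : Prop :=
  ∀ (x : M) (r : ℝ), ∃ s : Finset M, s.card ≤ 2 ^ k ∧
    ∀ y, d x y ≤ r → ∃ c ∈ s, d c y ≤ r / 2

/-!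
Let `P` be a shortest path in `H` through two distinct edges `e₁`, `e₂` with `w e₁ ≤ w e₂`, and
let `e'` be the edge of `H'` joining the endpoints of `P`. Then `w_H(e') ≥ w e₁ + w e₂ ≥ 2 w e₁`.
If moreover `e'` lies on a shortest path in `H'` between the endpoints of `e₁`, then
`w_H(e') ≤ t · w e₁` by the stretch bound of `H'`, which is impossible for `t < 2`.
-/

lemma List.add_le_sum_map_of_ne {α M : Type*} [AddCommMonoid M] [PartialOrder M]
    [CanonicallyOrderedAdd M] [IsOrderedAddMonoid M] (f : α → M) {l : List α} {x y : α}
    (hxy : x ≠ y) (hx : x ∈ l) (hy : y ∈ l) : f x + f y ≤ (l.map f).sum := by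
  have hpair : [x, y].Nodup := by simpa using hxy
  obtain ⟨l', hperm, hsub⟩ := hpair.subperm (l₂ := l) (by simp [hx, hy])
  calc f x + f y = (l'.map f).sum := by simpa using (hperm.map f).sum_eq.symm
    _ ≤ (l.map f).sum := (hsub.map f).sum_le_sum fun _ _ => zero_le

section WalkWeight

variable {V : Type*} {w : Sym2 V → ℝ} {G : SimpleGraph V} {u v : V}

lemma walkWeight_ne_top (p : G.Walk u v) : walkWeight w p ≠ ⊤ :=
  List.sum_induction (· ≠ ⊤) (fun _ _ ha hb => ENNReal.add_ne_top.2 ⟨ha, hb⟩)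
    ENNReal.zero_ne_top (by simp)

lemma ofReal_le_walkWeight (p : G.Walk u v) {e : Sym2 V} (he : e ∈ p.edges) :
    ENNReal.ofReal (w e) ≤ walkWeight w p :=
  List.le_sum_of_mem (List.mem_map_of_mem he)

lemma ofReal_add_ofReal_le_walkWeight (p : G.Walk u v) {e₁ e₂ : Sym2 V} (hne : e₁ ≠ e₂)
    (he₁ : e₁ ∈ p.edges) (he₂ : e₂ ∈ p.edges) :
    ENNReal.ofReal (w e₁) + ENNReal.ofReal (w e₂) ≤ walkWeight w p :=
  List.add_le_sum_map_of_ne (fun e => ENNReal.ofReal (w e)) hne he₁ he₂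

end WalkWeight

section Edist

variable {V : Type*} {H : Finset (Sym2 V)} {w : Sym2 V → ℝ} {u v : V}

lemma edist_le_walkWeight (p : (toSG H).Walk u v) : edist H w s(u, v) ≤ walkWeight w p :=
  sInf_le ⟨u, v, p, rfl, rfl⟩

lemma edist_le_ofReal_of_mem (huv : s(u, v) ∈ H) (hne : u ≠ v) :
    edist H w s(u, v) ≤ ENNReal.ofReal (w s(u, v)) := by
  have hadj : (toSG H).Adj u v := by simp [toSG, huv, hne]
  simpa [walkWeight] using edist_le_walkWeight (w := w) (hadj.toWalk)

lemma ofReal_indw_of_eq_walkWeight (p : (toSG H).Walk u v)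
    (hp : walkWeight w p = edist H w s(u, v)) :
    ENNReal.ofReal (indw H w s(u, v)) = edist H w s(u, v) :=
  ENNReal.ofReal_toReal (hp ▸ walkWeight_ne_top p)

lemma ofReal_add_ofReal_le_stretch_mul {t : ℝ} {H' : Finset (Sym2 V)}
    (hspan : ∀ u v : V, edist H' (indw H w) s(u, v) ≤ ENNReal.ofReal t * edist H w s(u, v))
    {u₁ v₁ u₂ v₂ a b : V} (Q₁ : (toSG H').Walk u₁ v₁) (P : (toSG H).Walk a b)
    (hne : s(u₁, v₁) ≠ s(u₂, v₂)) (he₁ : s(u₁, v₁) ∈ H)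
    (hQ₁ : walkWeight (indw H w) Q₁ = edist H' (indw H w) s(u₁, v₁))
    (hab : s(a, b) ∈ Q₁.edges) (hP : walkWeight w P = edist H w s(a, b))
    (h₁P : s(u₁, v₁) ∈ P.edges) (h₂P : s(u₂, v₂) ∈ P.edges) :
    ENNReal.ofReal (w s(u₁, v₁)) + ENNReal.ofReal (w s(u₂, v₂)) ≤
      ENNReal.ofReal t * ENNReal.ofReal (w s(u₁, v₁)) :=
  calc ENNReal.ofReal (w s(u₁, v₁)) + ENNReal.ofReal (w s(u₂, v₂))
      ≤ walkWeight w P := ofReal_add_ofReal_le_walkWeight P hne h₁P h₂P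
    _ = ENNReal.ofReal (indw H w s(a, b)) := by rw [hP, ofReal_indw_of_eq_walkWeight P hP]
    _ ≤ walkWeight (indw H w) Q₁ := ofReal_le_walkWeight Q₁ hab
    _ = edist H' (indw H w) s(u₁, v₁) := hQ₁
    _ ≤ ENNReal.ofReal t * edist H w s(u₁, v₁) := hspan u₁ v₁
    _ ≤ ENNReal.ofReal t * ENNReal.ofReal (w s(u₁, v₁)) := by
      gcongr
      exact edist_le_ofReal_of_mem he₁ (P.adj_of_mem_edges h₁P).ne

end Edist

lemma ENNReal.not_ofReal_add_ofReal_le_mul {t x y : ℝ} (ht : t < 2) (hx : 0 < x) (hxy : x ≤ y) :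
    ¬ ENNReal.ofReal x + ENNReal.ofReal y ≤ ENNReal.ofReal t * ENNReal.ofReal x := by
  rw [← ENNReal.ofReal_add hx.le (hx.le.trans hxy), ← ENNReal.ofReal_mul' hx.le,
    ENNReal.ofReal_le_ofReal_iff']
  rintro (h | h) <;> nlinarith

theorem covering_injection_general {V : Type*} [MetricSpace V] [Fintype V] [DecidableEq V]
    (t : ℝ) (ht2 : t < 2) (H H' : Finset (Sym2 V))
    (hH'span : ∀ u v : V, edist H' (indw H (mw V)) s(u, v) ≤
      ENNReal.ofReal t * edist H (mw V) s(u, v)) :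
    ¬ ∃ (u₁ v₁ u₂ v₂ a b : V) (Q₁ : (toSG H').Walk u₁ v₁)
        (Q₂ : (toSG H').Walk u₂ v₂) (P : (toSG H).Walk a b),
      s(u₁, v₁) ≠ s(u₂, v₂) ∧
      s(u₁, v₁) ∈ H ∧ s(u₁, v₁) ∉ H' ∧ s(u₂, v₂) ∈ H ∧ s(u₂, v₂) ∉ H' ∧
      s(a, b) ∈ H' ∧
      walkWeight (indw H (mw V)) Q₁ = edist H' (indw H (mw V)) s(u₁, v₁) ∧
      walkWeight (indw H (mw V)) Q₂ = edist H' (indw H (mw V)) s(u₂, v₂) ∧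
      s(a, b) ∈ Q₁.edges ∧ s(a, b) ∈ Q₂.edges ∧
      walkWeight (mw V) P = edist H (mw V) s(a, b) ∧
      s(u₁, v₁) ∈ P.edges ∧ s(u₂, v₂) ∈ P.edges := by
  rintro ⟨u₁, v₁, u₂, v₂, a, b, Q₁, Q₂, P, hne, he₁, -, he₂, -, -, hQ₁, hQ₂, hab₁, hab₂,
    hP, h₁P, h₂P⟩
  have hpos₁ : 0 < dist u₁ v₁ := dist_pos.2 (P.adj_of_mem_edges h₁P).ne
  have hpos₂ : 0 < dist u₂ v₂ := dist_pos.2 (P.adj_of_mem_edges h₂P).ne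
  rcases le_total (dist u₁ v₁) (dist u₂ v₂) with hle | hle
  · exact ENNReal.not_ofReal_add_ofReal_le_mul ht2 hpos₁ hle
      (ofReal_add_ofReal_le_stretch_mul hH'span Q₁ P hne he₁ hQ₁ hab₁ hP h₁P h₂P)
  · exact ENNReal.not_ofReal_add_ofReal_le_mul ht2 hpos₂ hle
      (ofReal_add_ofReal_le_stretch_mul hH'span Q₂ P hne.symm he₂ hQ₂ hab₂ hP h₂P h₁P)

/-- Covering injection lemma: let `H` be the greedy
`t`-spanner of a finite metric space with `t < 2` and `H'` a `t`-spanner of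
`M_H`. For edges `e'` of `H'`, fix shortest paths `P` in `H`; then no edge
`e' = (a,b)` of `H'` can cover (i.e., have its shortest path `P` pass through)
two distinct edges `e₁, e₂ ∈ H \ H'` each of whose assigned shortest path
`Qᵢ` in `H'` passes through `e'`. -/
theorem covering_injection {V : Type*} [MetricSpace V] [Fintype V] [DecidableEq V]
    (t : ℝ) (ht1 : 1 ≤ t) (ht2 : t < 2) (H H' : Finset (Sym2 V))
    (hH : IsGreedy (mw V) t (completeE V) H) (hH'sub : H' ⊆ completeE V)
    (hH'span : ∀ u v : V, edist H' (indw H (mw V)) s(u, v) ≤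
      ENNReal.ofReal t * edist H (mw V) s(u, v)) :
    ¬ ∃ (u₁ v₁ u₂ v₂ a b : V) (Q₁ : (toSG H').Walk u₁ v₁)
        (Q₂ : (toSG H').Walk u₂ v₂) (P : (toSG H).Walk a b),
      s(u₁, v₁) ≠ s(u₂, v₂) ∧
      s(u₁, v₁) ∈ H ∧ s(u₁, v₁) ∉ H' ∧ s(u₂, v₂) ∈ H ∧ s(u₂, v₂) ∉ H' ∧
      s(a, b) ∈ H' ∧
      walkWeight (indw H (mw V)) Q₁ = edist H' (indw H (mw V)) s(u₁, v₁) ∧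
      walkWeight (indw H (mw V)) Q₂ = edist H' (indw H (mw V)) s(u₂, v₂) ∧
      s(a, b) ∈ Q₁.edges ∧ s(a, b) ∈ Q₂.edges ∧
      walkWeight (mw V) P = edist H (mw V) s(a, b) ∧
      s(u₁, v₁) ∈ P.edges ∧ s(u₂, v₂) ∈ P.edges :=
  covering_injection_general t ht2 H H' hH'span
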